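/- Assume S(A,b) ≠ ∅ and let e be a selection with e(i) ∈ J̄_i for all i. Then the point X(e) defined by X(e)_j = max_{i : e(i)=j, b_i ≠ 0}(b_i + 1 - a_{ij}) (empty max = 0) is a feasible solution: max_j T_L(a_{ij}, X(e)_j) = b_i for all i. -/

import Mathlib

/-- The Łukasiewicz t-norm. -/
noncomputable def TL (a x : ℝ) : ℝ := max (a + x - 1) 0

/-- The candidate maximum solution `x̄` (empty min = 1, handled by the `if`). -/
noncomputable def xbar {m n : ℕ} [NeZero m] (A : Fin m → Fin n → ℝ) (b : Fin m → ℝ)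
    (j : Fin n) : ℝ :=
  Finset.univ.inf' Finset.univ_nonempty
    (fun i => if b i ≤ A i j then b i + 1 - A i j else 1)

/-- `x` is a feasible solution of the system `A φ x = b`. -/
def Feasible {m n : ℕ} [NeZero m] [NeZero n] (A : Fin m → Fin n → ℝ) (b : Fin m → ℝ)
    (x : Fin n → ℝ) : Prop :=
  (∀ j, x j ∈ Set.Icc (0:ℝ) 1) ∧
  ∀ i, Finset.univ.sup' Finset.univ_nonempty (fun j => TL (A i j) (x j)) = b i

/-- The candidate minimal point `X(e)` associated to a selection `e`
(empty max = 0, handled by the `if`). -/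
noncomputable def Xe {m n : ℕ} [NeZero m] (A : Fin m → Fin n → ℝ) (b : Fin m → ℝ)
    (e : Fin m → Fin n) (j : Fin n) : ℝ :=
  Finset.univ.sup' Finset.univ_nonempty
    (fun i => if e i = j ∧ b i ≠ 0 then b i + 1 - A i j else 0)

/-- `e` is a valid selection: `e i ∈ J̄ᵢ` for every `i`. -/
def ValidSel {m n : ℕ} [NeZero m] (A : Fin m → Fin n → ℝ) (b : Fin m → ℝ)
    (e : Fin m → Fin n) : Prop :=
  ∀ i, b i ≤ A i (e i) ∧ TL (A i (e i)) (xbar A b (e i)) = b i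

/-!
A term of the maximum defining `X(e) j` is either `0` or `b i + 1 - A i j` with `e i = j` and
`b i ≠ 0`; since `e i ∈ J̄ᵢ`, the equation `T_L(A i j, x̄ j) = b i > 0` forces this term to be
`x̄ j`. Hence `0 ≤ X(e) ≤ x̄ ≤ 1`, and as `x̄` is a subsolution, monotonicity of `T_L` gives
`max_j T_L(A i j, X(e) j) ≤ b i`, while the coordinate `e i` alone already reaches `b i`.
-/

lemma TL_nonneg (a x : ℝ) : 0 ≤ TL a x := le_max_right _ _

lemma add_sub_one_le_TL (a x : ℝ) : a + x - 1 ≤ TL a x := le_max_left _ _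

lemma TL_mono_right (a : ℝ) : Monotone (TL a) := fun _ _ h =>
  max_le_max (by linarith) le_rfl

section Solutions

variable {m n : ℕ} [NeZero m] (A : Fin m → Fin n → ℝ) (b : Fin m → ℝ)

lemma xbar_le_one (j : Fin n) : xbar A b j ≤ 1 := by
  refine Finset.inf'_le_of_le _ (Finset.mem_univ 0) ?_
  split_ifs with h
  · linarith
  · exact le_rfl

lemma add_xbar_sub_one_le (i : Fin m) (j : Fin n) : A i j + xbar A b j - 1 ≤ b i := by
  have hx : xbar A b j ≤ if b i ≤ A i j then b i + 1 - A i j else 1 :=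
    Finset.inf'_le _ (Finset.mem_univ i)
  split_ifs at hx with h
  · linarith
  · linarith [not_le.mp h]

lemma TL_xbar_le {i : Fin m} (hb : 0 ≤ b i) (j : Fin n) : TL (A i j) (xbar A b j) ≤ b i :=
  max_le (add_xbar_sub_one_le A b i j) hb

lemma xbar_nonneg {j : Fin n} (hA : ∀ i, A i j ≤ 1) (hb : ∀ i, 0 ≤ b i) : 0 ≤ xbar A b j := by
  refine Finset.le_inf' _ _ fun i _ => ?_
  split_ifs
  · linarith [hA i, hb i]
  · exact zero_le_one

variable {A b} {e : Fin m → Fin n}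

lemma ValidSel.nonneg (he : ValidSel A b e) (i : Fin m) : 0 ≤ b i :=
  (he i).2 ▸ TL_nonneg _ _

lemma ValidSel.xbar_eq (he : ValidSel A b e) {i : Fin m} (hbi : b i ≠ 0) :
    xbar A b (e i) = b i + 1 - A i (e i) := by
  have h := (he i).2
  rcases max_cases (A i (e i) + xbar A b (e i) - 1) 0 with ⟨hmax, -⟩ | ⟨hmax, -⟩
  · rw [TL, hmax] at h
    linarith
  · rw [TL, hmax] at h
    exact absurd h.symm hbi

lemma Xe_nonneg (hA : ∀ i j, A i j ≤ 1) (hb : ∀ i, 0 ≤ b i) (j : Fin n) : 0 ≤ Xe A b e j := by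
  refine Finset.le_sup'_of_le _ (Finset.mem_univ 0) ?_
  split_ifs
  · linarith [hA 0 j, hb 0]
  · exact le_rfl

lemma sub_le_Xe {i : Fin m} (hbi : b i ≠ 0) : b i + 1 - A i (e i) ≤ Xe A b e (e i) :=
  Finset.le_sup'_of_le _ (Finset.mem_univ i) (by simp [hbi])

lemma ValidSel.Xe_le_xbar (he : ValidSel A b e) (hA : ∀ i j, A i j ≤ 1) (j : Fin n) :
    Xe A b e j ≤ xbar A b j := by
  refine Finset.sup'_le _ _ fun i _ => ?_
  split_ifs with h
  · obtain ⟨rfl, hbi⟩ := h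
    exact (he.xbar_eq hbi).ge
  · exact xbar_nonneg A b (fun i => hA i j) he.nonneg

end Solutions

theorem stmt_11_general (m n : ℕ) [NeZero m] [NeZero n] (A : Fin m → Fin n → ℝ) (b : Fin m → ℝ)
    (hA : ∀ i j, A i j ∈ Set.Icc (0:ℝ) 1)
    (e : Fin m → Fin n) (he : ValidSel A b e) :
    Feasible A b (Xe A b e) := by
  have hA1 : ∀ i j, A i j ≤ 1 := fun i j => (hA i j).2
  refine ⟨fun j => ⟨Xe_nonneg hA1 he.nonneg j, (he.Xe_le_xbar hA1 j).trans (xbar_le_one A b j)⟩,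
    fun i => le_antisymm ?_ ?_⟩
  · exact Finset.sup'_le _ _ fun j _ =>
      (TL_mono_right _ (he.Xe_le_xbar hA1 j)).trans (TL_xbar_le A b (he.nonneg i) j)
  · refine Finset.le_sup'_of_le _ (Finset.mem_univ (e i)) ?_
    by_cases hbi : b i = 0
    · exact hbi ▸ TL_nonneg _ _
    · calc b i ≤ A i (e i) + Xe A b e (e i) - 1 := by linarith [sub_le_Xe (A := A) (e := e) hbi]
        _ ≤ TL (A i (e i)) (Xe A b e (e i)) := add_sub_one_le_TL _ _

theorem stmt_11 (m n : ℕ) [NeZero m] [NeZero n] (A : Fin m → Fin n → ℝ) (b : Fin m → ℝ)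
    (hA : ∀ i j, A i j ∈ Set.Icc (0:ℝ) 1) (hb : ∀ i, b i ∈ Set.Icc (0:ℝ) 1)
    (hS : ∃ x, Feasible A b x)
    (e : Fin m → Fin n) (he : ValidSel A b e) :
    Feasible A b (Xe A b e) :=
  stmt_11_general m n A b hA e he
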